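/- arXiv:1109.6603 — 2 statements merged into one kernel-verified Lean document; each statement's English description precedes it below -/
import Mathlib

section
/- Let a < b be real numbers, σ₁, σ₂ > 0, and u ∈ C¹([a,b], ℂ). Define d(t) = min(t − a, b − t) and σ(t) = σ₁ if t − a ≤ b − t, σ(t) = σ₂ otherwise. Then ∫ₐᵇ |u'(t)|² dt + σ₁|u(a)|² + σ₂|u(b)|² ≥ (1/4)∫ₐᵇ (d(t) + 1/(2σ(t)))⁻² |u(t)|² dt. -/
/-!
Ground-state substitution: for a real weight `w`, expanding `‖u' - w u‖² ≥ 0` gives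
`(w ‖u‖²)' ≤ ‖u'‖² + (w' + w²) ‖u‖²`. The weight `w = (2 (t - p))⁻¹` solves the Riccati equation
`w' + w² = -(4 (t - p)²)⁻¹`, so integrating yields a Hardy inequality with boundary terms
`w ‖u‖²`. On the left half of `[a, b]` the pole is put at `a - 1 / (2 σ₁)`, which makes the
boundary term at `a` exactly the Robin term `σ₁ ‖u a‖²` and gives the one at the midpoint the
favourable sign; symmetrically on the right half with the pole at `b + 1 / (2 σ₂)`.
-/

open Set MeasureTheory intervalIntegral

lemma intervalIntegrable_inv_sq_mul_norm_sq {E : Type*} [NormedAddCommGroup E] {c d : ℝ}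
    {q : ℝ → ℝ} {u : ℝ → E} (hcd : c ≤ d) (hq : ContinuousOn q (Icc c d))
    (hq₀ : ∀ t ∈ Icc c d, q t ≠ 0) (huc : ContinuousOn u (Icc c d)) :
    IntervalIntegrable (fun t ↦ (q t ^ 2)⁻¹ * ‖u t‖ ^ 2) volume c d :=
  ((hq.pow 2).inv₀ fun t ht ↦ pow_ne_zero 2 (hq₀ t ht)).mul (huc.norm.pow 2)
    |>.intervalIntegrable_of_Icc hcd

lemma intervalIntegral.integral_eq_add_of_eqOn_Ioo {E : Type*} [NormedAddCommGroup E]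
    [NormedSpace ℝ E] {f g h : ℝ → E} {a m b : ℝ} (ham : a ≤ m) (hmb : m ≤ b)
    (hg : IntervalIntegrable g volume a m) (hh : IntervalIntegrable h volume m b)
    (hfg : EqOn f g (Ioo a m)) (hfh : EqOn f h (Ioo m b)) :
    ∫ t in a..b, f t = (∫ t in a..m, g t) + ∫ t in m..b, h t := by
  rw [← uIoo_of_le ham] at hfg
  rw [← uIoo_of_le hmb] at hfh
  rw [← integral_congr_uIoo hfg, ← integral_congr_uIoo hfh,
    integral_add_adjacent_intervals (hg.congr_uIoo fun t ht ↦ (hfg ht).symm)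
      (hh.congr_uIoo fun t ht ↦ (hfh ht).symm)]

lemma ContDiffOn.intervalIntegrable_norm_deriv_sq {E : Type*} [NormedAddCommGroup E]
    [NormedSpace ℝ E] {a b : ℝ} {u : ℝ → E} (hab : a < b) (hu : ContDiffOn ℝ 1 u (Icc a b)) :
    IntervalIntegrable (fun t ↦ ‖deriv u t‖ ^ 2) volume a b := by
  have hcont : ContinuousOn (fun t ↦ ‖derivWithin u (Icc a b) t‖ ^ 2) (Icc a b) :=
    (hu.continuousOn_derivWithin (uniqueDiffOn_Icc hab) le_rfl).norm.pow 2
  refine (hcont.intervalIntegrable_of_Icc hab.le).congr_uIoo fun t ht ↦ ?_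
  rw [uIoo_of_le hab.le] at ht
  simp only [derivWithin_of_mem_nhds (Icc_mem_nhds ht.1 ht.2)]

lemma ContDiffOn.hasDerivAt_deriv_of_mem_Ioo {E : Type*} [NormedAddCommGroup E]
    [NormedSpace ℝ E] {a b t : ℝ} {u : ℝ → E} (hu : ContDiffOn ℝ 1 u (Icc a b))
    (ht : t ∈ Ioo a b) : HasDerivAt u (deriv u t) t :=
  ((hu.differentiableOn one_ne_zero t (Ioo_subset_Icc_self ht)).differentiableAt
    (Icc_mem_nhds ht.1 ht.2)).hasDerivAt

section GroundState

variable {E : Type*} [NormedAddCommGroup E] [InnerProductSpace ℝ E]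

lemma two_mul_mul_inner_le (w : ℝ) (x y : E) :
    2 * w * inner ℝ x y ≤ ‖y‖ ^ 2 + w ^ 2 * ‖x‖ ^ 2 := by
  have h := norm_sub_sq_real y (w • x)
  rw [inner_smul_right, norm_smul, mul_pow, Real.norm_eq_abs, sq_abs, real_inner_comm] at h
  nlinarith [sq_nonneg ‖y - w • x‖]

lemma mul_norm_sq_sub_le_integral {c d : ℝ} {u u' : ℝ → E} {w w' : ℝ → ℝ} (hcd : c ≤ d)
    (huc : ContinuousOn u (Icc c d)) (hwc : ContinuousOn w (Icc c d))
    (hu : ∀ t ∈ Ioo c d, HasDerivAt u (u' t) t) (hw : ∀ t ∈ Ioo c d, HasDerivAt w (w' t) t)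
    (hint : IntervalIntegrable (fun t ↦ ‖u' t‖ ^ 2 + (w' t + w t ^ 2) * ‖u t‖ ^ 2) volume c d) :
    w d * ‖u d‖ ^ 2 - w c * ‖u c‖ ^ 2 ≤
      ∫ t in c..d, ‖u' t‖ ^ 2 + (w' t + w t ^ 2) * ‖u t‖ ^ 2 := by
  refine sub_le_integral_of_hasDeriv_right_of_le hcd (hwc.mul (huc.norm.pow 2))
    (fun t ht ↦ ((hw t ht).mul (hu t ht).norm_sq).hasDerivWithinAt)
    ((intervalIntegrable_iff_integrableOn_Icc_of_le hcd).mp hint) fun t _ ↦ ?_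
  nlinarith [two_mul_mul_inner_le (w t) (u t) (u' t)]

variable {c d : ℝ} {u u' : ℝ → E}

lemma hardy_of_pole_notMem {p : ℝ} (hcd : c ≤ d) (hp : p ∉ Icc c d)
    (huc : ContinuousOn u (Icc c d)) (hu : ∀ t ∈ Ioo c d, HasDerivAt u (u' t) t)
    (hu' : IntervalIntegrable (fun t ↦ ‖u' t‖ ^ 2) volume c d) :
    (2 * (d - p))⁻¹ * ‖u d‖ ^ 2 - (2 * (c - p))⁻¹ * ‖u c‖ ^ 2 ≤
      (∫ t in c..d, ‖u' t‖ ^ 2) - 1 / 4 * ∫ t in c..d, ((t - p) ^ 2)⁻¹ * ‖u t‖ ^ 2 := by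
  have hne : ∀ t ∈ Icc c d, t - p ≠ 0 := fun t ht ↦ sub_ne_zero.mpr (ne_of_mem_of_not_mem ht hp)
  have hwc : ContinuousOn (fun t ↦ (2 * (t - p))⁻¹) (Icc c d) :=
    (continuousOn_const.mul (continuousOn_id.sub continuousOn_const)).inv₀
      fun t ht ↦ mul_ne_zero two_ne_zero (hne t ht)
  have hw : ∀ t ∈ Ioo c d, HasDerivAt (fun s ↦ (2 * (s - p))⁻¹) (-(2 * (t - p) ^ 2)⁻¹) t := by
    intro t ht
    have h : HasDerivAt (fun s ↦ (2 * (s - p))⁻¹) (-(2 * 1) / (2 * (t - p)) ^ 2) t :=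
      (((hasDerivAt_id t).sub_const p).const_mul 2).inv
        (mul_ne_zero two_ne_zero (hne t (Ioo_subset_Icc_self ht)))
    convert h using 1
    field_simp
  have hriccati (t : ℝ) :
      -(2 * (t - p) ^ 2)⁻¹ + (2 * (t - p))⁻¹ ^ 2 = -(1 / 4) * ((t - p) ^ 2)⁻¹ := by
    generalize t - p = x
    ring
  have hρ := intervalIntegrable_inv_sq_mul_norm_sq hcd (by fun_prop) hne huc
  have key := mul_norm_sq_sub_le_integral hcd huc hwc hu hw
  simp only [hriccati, mul_assoc, ← sub_eq_add_neg, neg_mul] at key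
  rw [integral_sub hu' (hρ.const_mul _), intervalIntegral.integral_const_mul] at key
  exact key (hu'.sub (hρ.const_mul _))

lemma robin_hardy_left {σ : ℝ} (hcd : c ≤ d) (hσ : 0 < σ) (huc : ContinuousOn u (Icc c d))
    (hu : ∀ t ∈ Ioo c d, HasDerivAt u (u' t) t)
    (hu' : IntervalIntegrable (fun t ↦ ‖u' t‖ ^ 2) volume c d) :
    -(σ * ‖u c‖ ^ 2) ≤
      (∫ t in c..d, ‖u' t‖ ^ 2) - 1 / 4 * ∫ t in c..d, ((t - c + 1 / (2 * σ)) ^ 2)⁻¹ * ‖u t‖ ^ 2 := by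
  have hδ : 0 < 1 / (2 * σ) := by positivity
  have h := hardy_of_pole_notMem hcd (p := c - 1 / (2 * σ)) (fun h ↦ by linarith [h.1]) huc hu hu'
  have hd : 0 ≤ (2 * (d - (c - 1 / (2 * σ))))⁻¹ * ‖u d‖ ^ 2 :=
    mul_nonneg (inv_nonneg.mpr (by linarith)) (sq_nonneg _)
  have hc : (2 * (c - (c - 1 / (2 * σ))))⁻¹ = σ := by field_simp; ring
  have hsq (t : ℝ) : (t - (c - 1 / (2 * σ))) ^ 2 = (t - c + 1 / (2 * σ)) ^ 2 := by ring
  simp only [hc, hsq] at h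
  linarith

lemma robin_hardy_right {σ : ℝ} (hcd : c ≤ d) (hσ : 0 < σ) (huc : ContinuousOn u (Icc c d))
    (hu : ∀ t ∈ Ioo c d, HasDerivAt u (u' t) t)
    (hu' : IntervalIntegrable (fun t ↦ ‖u' t‖ ^ 2) volume c d) :
    -(σ * ‖u d‖ ^ 2) ≤
      (∫ t in c..d, ‖u' t‖ ^ 2) - 1 / 4 * ∫ t in c..d, ((d - t + 1 / (2 * σ)) ^ 2)⁻¹ * ‖u t‖ ^ 2 := by
  have hδ : 0 < 1 / (2 * σ) := by positivity
  have h := hardy_of_pole_notMem hcd (p := d + 1 / (2 * σ)) (fun h ↦ by linarith [h.2]) huc hu hu'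
  have hc : (2 * (c - (d + 1 / (2 * σ))))⁻¹ * ‖u c‖ ^ 2 ≤ 0 :=
    mul_nonpos_of_nonpos_of_nonneg (inv_nonpos.mpr (by linarith)) (sq_nonneg _)
  have hd : (2 * (d - (d + 1 / (2 * σ))))⁻¹ = -σ := by field_simp; ring
  have hsq (t : ℝ) : (t - (d + 1 / (2 * σ))) ^ 2 = (d - t + 1 / (2 * σ)) ^ 2 := by ring
  simp only [hd, hsq] at h
  linarith

end GroundState

theorem interval_robin_hardy (a b σ₁ σ₂ : ℝ) (hab : a < b) (hσ₁ : 0 < σ₁) (hσ₂ : 0 < σ₂)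
    (u : ℝ → ℂ) (hu : ContDiffOn ℝ 1 u (Set.Icc a b)) :
    (∫ t in a..b, ‖deriv u t‖ ^ 2) + σ₁ * ‖u a‖ ^ 2 + σ₂ * ‖u b‖ ^ 2 ≥
      (1 / 4) * ∫ t in a..b,
        ((min (t - a) (b - t) + 1 / (2 * (if t - a ≤ b - t then σ₁ else σ₂))) ^ 2)⁻¹
          * ‖u t‖ ^ 2 := by
  set m := (a + b) / 2 with hm
  have ham : a ≤ m := by linarith
  have hmb : m ≤ b := by linarith
  have hu₁ := hu.continuousOn.mono (Icc_subset_Icc_right hmb)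
  have hu₂ := hu.continuousOn.mono (Icc_subset_Icc_left ham)
  obtain ⟨hDu₁, hDu₂⟩ := (IntervalIntegrable.trans_iff (mem_uIcc_of_le ham hmb)).mp
    (hu.intervalIntegrable_norm_deriv_sq hab)
  have hleft := robin_hardy_left ham hσ₁ hu₁
    (fun _ ht ↦ hu.hasDerivAt_deriv_of_mem_Ioo ⟨ht.1, ht.2.trans_le hmb⟩) hDu₁
  have hright := robin_hardy_right hmb hσ₂ hu₂
    (fun _ ht ↦ hu.hasDerivAt_deriv_of_mem_Ioo ⟨ham.trans_lt ht.1, ht.2⟩) hDu₂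
  have hδ₁ : 0 < 1 / (2 * σ₁) := by positivity
  have hδ₂ : 0 < 1 / (2 * σ₂) := by positivity
  rw [ge_iff_le, integral_eq_add_of_eqOn_Ioo ham hmb
    (intervalIntegrable_inv_sq_mul_norm_sq ham (by fun_prop)
      (fun t ht ↦ by linarith [ht.1] : ∀ t ∈ Icc a m, t - a + 1 / (2 * σ₁) ≠ 0) hu₁)
    (intervalIntegrable_inv_sq_mul_norm_sq hmb (by fun_prop)
      (fun t ht ↦ by linarith [ht.2] : ∀ t ∈ Icc m b, b - t + 1 / (2 * σ₂) ≠ 0) hu₂)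
    (fun t ht ↦ ?_) (fun t ht ↦ ?_), ← integral_add_adjacent_intervals hDu₁ hDu₂]
  · linarith
  · have h : t - a ≤ b - t := by linarith [ht.2, hm]
    simp only [if_pos h, min_eq_left h]
  · have h : ¬ t - a ≤ b - t := by linarith [ht.1, hm]
    simp only [if_neg h, min_eq_right (le_of_not_ge h)]
end

section
/- Let b > 0 and let u ∈ C¹([0,b], ℂ). For any f ∈ C¹([0,b], ℝ), ( ∫₀ᵇ f'(t)|u(t)|² dt − (f(b) − f(0))|u(0)|² )² ≤ 4 ( ∫₀ᵇ |u'(t)|² dt ) ( ∫₀ᵇ (f(b) − f(t))² |u(t)|² dt ). -/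
/-!
Write `V = ‖u‖²`, so `V' = 2⟪u, u'⟫`. Integrating `(f b - f) V'` by parts turns the left-hand
quantity into `∫ (f b - f t) V'(t) dt`, whose integrand is bounded by `2 ‖u'‖ · |f b - f| ‖u‖`;
Cauchy–Schwarz for integrals finishes the proof.
-/

open MeasureTheory Set
open scoped Interval

section CauchySchwarz

variable {a b : ℝ}

theorem sq_intervalIntegral_mul_le (hab : a ≤ b) {p q : ℝ → ℝ}
    (hp : IntervalIntegrable (fun t => p t ^ 2) volume a b)
    (hq : IntervalIntegrable (fun t => q t ^ 2) volume a b)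
    (hpq : IntervalIntegrable (fun t => p t * q t) volume a b) :
    (∫ t in a..b, p t * q t) ^ 2 ≤ (∫ t in a..b, p t ^ 2) * ∫ t in a..b, q t ^ 2 := by
  have quadratic_nonneg : ∀ s : ℝ, 0 ≤ (∫ t in a..b, p t ^ 2) * (s * s)
      + (-2 * ∫ t in a..b, p t * q t) * s + ∫ t in a..b, q t ^ 2 := fun s =>
    calc 0 ≤ ∫ t in a..b, (s * p t - q t) ^ 2 :=
          intervalIntegral.integral_nonneg hab fun t _ => sq_nonneg _
      _ = ∫ t in a..b, ((s * s) * p t ^ 2 + (-2 * s) * (p t * q t) + q t ^ 2) := by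
          congr 1; ext t; ring
      _ = _ := by
          rw [intervalIntegral.integral_add ((hp.const_mul _).add (hpq.const_mul _)) hq,
            intervalIntegral.integral_add (hp.const_mul _) (hpq.const_mul _),
            intervalIntegral.integral_const_mul, intervalIntegral.integral_const_mul]
          ring
  have := discrim_le_zero quadratic_nonneg
  rw [discrim] at this
  linarith

theorem sq_intervalIntegral_le_of_abs_le_mul (hab : a ≤ b) {g p q : ℝ → ℝ}
    (hg : IntervalIntegrable g volume a b)
    (hp : IntervalIntegrable (fun t => p t ^ 2) volume a b)
    (hq : IntervalIntegrable (fun t => q t ^ 2) volume a b)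
    (hpq : IntervalIntegrable (fun t => p t * q t) volume a b)
    (h : ∀ t ∈ Icc a b, |g t| ≤ p t * q t) :
    (∫ t in a..b, g t) ^ 2 ≤ (∫ t in a..b, p t ^ 2) * ∫ t in a..b, q t ^ 2 := by
  have habs : |∫ t in a..b, g t| ≤ ∫ t in a..b, p t * q t :=
    (intervalIntegral.abs_integral_le_integral_abs hab).trans
      (intervalIntegral.integral_mono_on hab hg.abs hpq h)
  calc (∫ t in a..b, g t) ^ 2 = |∫ t in a..b, g t| ^ 2 := (sq_abs _).symm
    _ ≤ (∫ t in a..b, p t * q t) ^ 2 := pow_le_pow_left₀ (abs_nonneg _) habs 2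
    _ ≤ _ := sq_intervalIntegral_mul_le hab hp hq hpq

end CauchySchwarz

theorem intervalIntegral.integral_comp_deriv_eq_integral_comp_derivWithin
    {E G : Type*} [NormedAddCommGroup E] [NormedSpace ℝ E] [NormedAddCommGroup G]
    [NormedSpace ℝ G] {a b : ℝ} (hab : a ≤ b) (F : E → ℝ → G) (g : ℝ → E) :
    ∫ t in a..b, F (deriv g t) t = ∫ t in a..b, F (derivWithin g (Icc a b) t) t := by
  rw [intervalIntegral.integral_of_le hab, intervalIntegral.integral_of_le hab,
    integral_Ioc_eq_integral_Ioo, integral_Ioc_eq_integral_Ioo]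
  refine setIntegral_congr_fun measurableSet_Ioo fun t ht => ?_
  rw [derivWithin_of_mem_nhds (Icc_mem_nhds ht.1 ht.2)]

section NormSq

variable {F : Type*} [NormedAddCommGroup F] [InnerProductSpace ℝ F] {a b : ℝ}
  {u u' : ℝ → F} {f f' : ℝ → ℝ}

theorem integral_deriv_mul_norm_sq_sub_eq (hab : a ≤ b)
    (hu : ∀ t ∈ Icc a b, HasDerivWithinAt u (u' t) (Icc a b) t) (hu' : ContinuousOn u' (Icc a b))
    (hf : ∀ t ∈ Icc a b, HasDerivWithinAt f (f' t) (Icc a b) t) (hf' : ContinuousOn f' (Icc a b)) :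
    (∫ t in a..b, f' t * ‖u t‖ ^ 2) - (f b - f a) * ‖u a‖ ^ 2
      = ∫ t in a..b, (f b - f t) * (2 * inner ℝ (u t) (u' t)) := by
  rw [← uIcc_of_le hab] at hu hu' hf hf'
  have hU : ∀ t ∈ [[a, b]], HasDerivWithinAt (fun s => f b - f s) (-f' t) [[a, b]] t :=
    fun t ht => (hf t ht).const_sub _
  have hV : ∀ t ∈ [[a, b]], HasDerivWithinAt (fun s => ‖u s‖ ^ 2)
      (2 * inner ℝ (u t) (u' t)) [[a, b]] t := fun t ht => (hu t ht).norm_sq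
  have huc : ContinuousOn u [[a, b]] := fun t ht => (hu t ht).continuousWithinAt
  rw [intervalIntegral.integral_mul_deriv_eq_deriv_mul_of_hasDerivWithinAt hU hV
    hf'.neg.intervalIntegrable (continuousOn_const.mul (huc.inner hu')).intervalIntegrable]
  simp only [sub_self, zero_mul, zero_sub, neg_mul, intervalIntegral.integral_neg]
  ring

theorem sq_integral_deriv_mul_norm_sq_sub_le (hab : a ≤ b)
    (hu : ∀ t ∈ Icc a b, HasDerivWithinAt u (u' t) (Icc a b) t) (hu' : ContinuousOn u' (Icc a b))
    (hf : ∀ t ∈ Icc a b, HasDerivWithinAt f (f' t) (Icc a b) t) (hf' : ContinuousOn f' (Icc a b)) :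
    ((∫ t in a..b, f' t * ‖u t‖ ^ 2) - (f b - f a) * ‖u a‖ ^ 2) ^ 2 ≤
      4 * (∫ t in a..b, ‖u' t‖ ^ 2) * ∫ t in a..b, (f b - f t) ^ 2 * ‖u t‖ ^ 2 := by
  have huc : ContinuousOn u (Icc a b) := fun t ht => (hu t ht).continuousWithinAt
  have hfc : ContinuousOn f (Icc a b) := fun t ht => (hf t ht).continuousWithinAt
  have integrable {φ : ℝ → ℝ} (hφ : ContinuousOn φ (Icc a b)) :
      IntervalIntegrable φ volume a b :=
    hφ.intervalIntegrable_of_Icc hab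
  have hp : ContinuousOn (fun t => 2 * ‖u' t‖) (Icc a b) := continuousOn_const.mul hu'.norm
  have hq : ContinuousOn (fun t => |f b - f t| * ‖u t‖) (Icc a b) :=
    (continuousOn_const.sub hfc).abs.mul huc.norm
  rw [integral_deriv_mul_norm_sq_sub_eq hab hu hu' hf hf']
  calc _ ≤ (∫ t in a..b, (2 * ‖u' t‖) ^ 2) * ∫ t in a..b, (|f b - f t| * ‖u t‖) ^ 2 := by
        refine sq_intervalIntegral_le_of_abs_le_mul hab
          (integrable ((continuousOn_const.sub hfc).mul (continuousOn_const.mul (huc.inner hu'))))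
          (integrable (hp.pow 2)) (integrable (hq.pow 2)) (integrable (hp.mul hq)) fun t _ => ?_
        calc |(f b - f t) * (2 * inner ℝ (u t) (u' t))|
            = 2 * |f b - f t| * |inner ℝ (u t) (u' t)| := by
              rw [abs_mul, abs_mul, abs_two]; ring
          _ ≤ 2 * |f b - f t| * (‖u t‖ * ‖u' t‖) := by
              gcongr; exact abs_real_inner_le_norm _ _
          _ = 2 * ‖u' t‖ * (|f b - f t| * ‖u t‖) := by ring
    _ = _ := by
        simp only [mul_pow, sq_abs, intervalIntegral.integral_const_mul]
        norm_num

end NormSq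

theorem cauchy_schwarz_step (b : ℝ) (hb : 0 < b) (u : ℝ → ℂ) (f : ℝ → ℝ)
    (hu : ContDiffOn ℝ 1 u (Set.Icc 0 b)) (hf : ContDiffOn ℝ 1 f (Set.Icc 0 b)) :
    ((∫ t in (0:ℝ)..b, deriv f t * ‖u t‖ ^ 2) - (f b - f 0) * ‖u 0‖ ^ 2) ^ 2 ≤
      4 * (∫ t in (0:ℝ)..b, ‖deriv u t‖ ^ 2)
        * ∫ t in (0:ℝ)..b, (f b - f t) ^ 2 * ‖u t‖ ^ 2 := by
  have hunique : UniqueDiffOn ℝ (Icc 0 b) := uniqueDiffOn_Icc hb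
  have hf_deriv : ∫ t in (0:ℝ)..b, deriv f t * ‖u t‖ ^ 2
      = ∫ t in (0:ℝ)..b, derivWithin f (Icc 0 b) t * ‖u t‖ ^ 2 :=
    intervalIntegral.integral_comp_deriv_eq_integral_comp_derivWithin hb.le
      (fun d t => d * ‖u t‖ ^ 2) f
  have hu_deriv : ∫ t in (0:ℝ)..b, ‖deriv u t‖ ^ 2
      = ∫ t in (0:ℝ)..b, ‖derivWithin u (Icc 0 b) t‖ ^ 2 :=
    intervalIntegral.integral_comp_deriv_eq_integral_comp_derivWithin hb.le
      (fun d _ => ‖d‖ ^ 2) u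
  rw [hf_deriv, hu_deriv]
  exact sq_integral_deriv_mul_norm_sq_sub_le hb.le
    (fun t ht => (hu.differentiableOn one_ne_zero t ht).hasDerivWithinAt)
    (hu.continuousOn_derivWithin hunique le_rfl)
    (fun t ht => (hf.differentiableOn one_ne_zero t ht).hasDerivWithinAt)
    (hf.continuousOn_derivWithin hunique le_rfl)
end
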